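/- Let M, K_d, U > 0 and let θ, θ̇ : ℝ → ℝ be twice/once differentiable functions satisfying M·θ̈(t) = -K_d·θ̇(t) - K_p·θ(t) + U·sin(θ(t) + θ₀(t)) with K_p > 0. Define V₁(t) = (1/2)·M·θ̇(t)² + (1/2)·K_p·θ(t)². Then V₁'(t) = -K_d·θ̇(t)² + U·sin(θ(t)+θ₀(t))·θ̇(t), and whenever |θ̇(t)| > U/K_d, V₁'(t) < 0. -/

import Mathlib

/-! The derivative of the energy `V₁` along a trajectory is `θ̇ · (M θ̈ + K_p θ)`, which the
equation of motion turns into `-K_d θ̇² + U sin(θ + θ₀) θ̇`. The forcing term is at most `U |θ̇|`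
in absolute value, so the damping `K_d θ̇²` dominates as soon as `K_d |θ̇| > U`. -/

open Real

theorem HasDerivAt.half_mul_sq_add_half_mul_sq {f f' f'' : ℝ → ℝ} (M K t : ℝ)
    (hf : HasDerivAt f (f' t) t) (hf' : HasDerivAt f' (f'' t) t) :
    HasDerivAt (fun s => (1/2) * M * (f' s) ^ 2 + (1/2) * K * (f s) ^ 2)
      ((M * f'' t + K * f t) * f' t) t := by
  refine (((hf'.fun_pow 2).const_mul ((1/2) * M)).add
    ((hf.fun_pow 2).const_mul ((1/2) * K))).congr_deriv ?_
  ring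

theorem neg_mul_sq_add_mul_neg_of_abs_le {a b c x : ℝ} (ha : |a| ≤ b) (hx : b < c * |x|) :
    -c * x ^ 2 + a * x < 0 := by
  have hx_pos : 0 < |x| := by
    refine (abs_nonneg x).lt_of_ne fun h => ?_
    rw [← h, mul_zero] at hx
    linarith [(abs_nonneg a).trans ha]
  have hax : a * x ≤ b * |x| :=
    calc a * x ≤ |a| * |x| := by rw [← abs_mul]; exact le_abs_self _
      _ ≤ b * |x| := by gcongr
  have hcx : b * |x| < c * x ^ 2 :=
    calc b * |x| < c * |x| * |x| := by gcongr
      _ = c * x ^ 2 := by rw [mul_assoc, ← sq, sq_abs]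
  linarith

theorem lyapunov_V1_deriv_general (M K_d K_p U : ℝ) (hKd : K_d > 0) (hU : U > 0)
    (θ θ' θ'' θ₀ : ℝ → ℝ)
    (hθ : ∀ t, HasDerivAt θ (θ' t) t)
    (hθ' : ∀ t, HasDerivAt θ' (θ'' t) t)
    (hdyn : ∀ t, M * θ'' t = -K_d * θ' t - K_p * θ t + U * Real.sin (θ t + θ₀ t)) :
    ∀ t, HasDerivAt (fun s => (1/2) * M * (θ' s) ^ 2 + (1/2) * K_p * (θ s) ^ 2)
        (-K_d * (θ' t) ^ 2 + U * Real.sin (θ t + θ₀ t) * θ' t) t ∧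
      (|θ' t| > U / K_d →
        -K_d * (θ' t) ^ 2 + U * Real.sin (θ t + θ₀ t) * θ' t < 0) := by
  intro t
  refine ⟨?_, fun hfast => ?_⟩
  · convert HasDerivAt.half_mul_sq_add_half_mul_sq M K_p t (hθ t) (hθ' t) using 1
    rw [hdyn t]
    ring
  · have hforce : |U * Real.sin (θ t + θ₀ t)| ≤ U := by
      rw [abs_mul, abs_of_pos hU]
      exact mul_le_of_le_one_right hU.le (abs_sin_le_one _)
    have hdamp : U < K_d * |θ' t| := by
      rwa [gt_iff_lt, div_lt_iff₀ hKd, mul_comm] at hfast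
    exact neg_mul_sq_add_mul_neg_of_abs_le hforce hdamp

theorem lyapunov_V1_deriv (M K_d K_p U : ℝ) (hM : M > 0) (hKd : K_d > 0) (hU : U > 0)
    (hKp : K_p > 0)
    (θ θ' θ'' θ₀ : ℝ → ℝ)
    (hθ : ∀ t, HasDerivAt θ (θ' t) t)
    (hθ' : ∀ t, HasDerivAt θ' (θ'' t) t)
    (hdyn : ∀ t, M * θ'' t = -K_d * θ' t - K_p * θ t + U * Real.sin (θ t + θ₀ t)) :
    ∀ t, HasDerivAt (fun s => (1/2) * M * (θ' s) ^ 2 + (1/2) * K_p * (θ s) ^ 2)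
        (-K_d * (θ' t) ^ 2 + U * Real.sin (θ t + θ₀ t) * θ' t) t ∧
      (|θ' t| > U / K_d →
        -K_d * (θ' t) ^ 2 + U * Real.sin (θ t + θ₀ t) * θ' t < 0) :=
  lyapunov_V1_deriv_general M K_d K_p U hKd hU θ θ' θ'' θ₀ hθ hθ' hdyn
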